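/- Let k, l ≥ 1 and r ≥ 1 be integers. There exist rational numbers b_0, …, b_{r−1} such that for all holomorphic f, g : ℍ → ℂ one has R_k^r(f)·g = C(k+l+2r−2, r)^{−1}·[f,g]_r + R_{k+l+2r−2}( Σ_{s=0}^{r−1} b_s · R_k^s(f) · R_l^{r−1−s}(g) ). -/

import Mathlib

noncomputable section

open Complex Real

/-- The upper half-plane, as a subset of `ℂ`. -/
def UHP : Set ℂ := {z : ℂ | 0 < z.im}

/-- `e(z) = exp(2πiz)`. -/
def e (z : ℂ) : ℂ := Complex.exp (2 * (π : ℂ) * I * z)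

/-- The Wirtinger derivative `∂f/∂τ = (1/2)(∂f/∂x − i ∂f/∂y)`. -/
def dtau (f : ℂ → ℂ) (z : ℂ) : ℂ := (fderiv ℝ f z 1 - I * fderiv ℝ f z I) / 2

/-- The raising operator `R_w f = (1/(2πi)) (∂f/∂τ + w f/(τ − τ̄))`. -/
def Rop (w : ℤ) (f : ℂ → ℂ) : ℂ → ℂ :=
  fun z => (1 / (2 * (π : ℂ) * I)) * (dtau f z + (w : ℂ) * f z / (z - (starRingEnd ℂ) z))

/-- Iterated raising operator: `R_w^0 = id`, `R_w^{n+1} = R_{w+2n} ∘ R_w^n`. -/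
def Riter (w : ℤ) : ℕ → (ℂ → ℂ) → (ℂ → ℂ)
  | 0 => fun f => f
  | n + 1 => fun f => Rop (w + 2 * n) (Riter w n f)

/-- Normalized derivative `f^{(r)} = (2πi)^{−r} d^r f/dτ^r`. -/
def fder (r : ℕ) (f : ℂ → ℂ) : ℂ → ℂ :=
  fun z => ((2 * (π : ℂ) * I) ^ r)⁻¹ * iteratedDeriv r f z

/-- The Rankin–Cohen bracket of `f` and `g` with weight parameters `k`, `l`:
`[f,g]_r = Σ_{s=0}^r (−1)^s C(k+r−1,s) C(l+r−1,r−s) f^{(r−s)} g^{(s)}`. -/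
def RCbracket (k l r : ℕ) (f g : ℂ → ℂ) : ℂ → ℂ :=
  fun z => ∑ s ∈ Finset.range (r + 1),
    (-1 : ℂ) ^ s * (Nat.choose (k + r - 1) s : ℂ) * (Nat.choose (l + r - 1) (r - s) : ℂ) *
      fder (r - s) f z * fder s g z


/-!
On `ℍ` one has `R_k^n f = Σ_j C(n,j) (k+j)(k+j+1)⋯(k+n-1) v^(n-j) f^(j)` with
`v = 1/(2πi(τ - τ̄))`. Substituting this into
`Σ_s (-1)^s C(k+r-1,s) C(l+r-1,r-s) R_k^(r-s) f · R_l^s g`, the coefficient of every positive power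
of `v` is an alternating binomial sum, hence zero, and what is left is `[f,g]_r`.
So with `P_a = R_k^a f · R_l^(r-a) g`, both `P_r` and `C(k+l+2r-2,r)⁻¹ [f,g]_r` are rational
combinations of the `P_a`, and by Vandermonde's identity their coefficients have the same
alternating sum. By the Leibniz rule `R_{k+l+2r-2}(R_k^a f · R_l^(r-1-a) g) = P_(a+1) + P_a`, and a
combination of the `P_a` with vanishing alternating sum is a combination of these consecutive sums.
-/

open Finset

section Telescoping

variable {R M : Type*} [CommRing R] [AddCommGroup M] [Module R M]

def altPartialSum (x : ℕ → R) (n : ℕ) : R := (-1) ^ n * ∑ t ∈ range (n + 1), (-1) ^ t * x t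

lemma altPartialSum_zero (x : ℕ → R) : altPartialSum x 0 = x 0 := by
  simp [altPartialSum]

lemma altPartialSum_succ (x : ℕ → R) (n : ℕ) :
    altPartialSum x (n + 1) = x (n + 1) - altPartialSum x n := by
  have hsq : ((-1 : R) ^ (n + 1)) * (-1) ^ (n + 1) = 1 := by
    rw [← pow_add, ← two_mul, pow_mul, neg_one_sq, one_pow]
  simp only [altPartialSum, sum_range_succ, mul_add]
  linear_combination x (n + 1) * hsq

lemma sum_smul_eq_sum_altPartialSum_smul_add (x : ℕ → R) (P : ℕ → M) (n : ℕ) :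
    ∑ a ∈ range (n + 1), x a • P a
      = ∑ a ∈ range n, altPartialSum x a • (P (a + 1) + P a) + altPartialSum x n • P n := by
  induction n with
  | zero => simp [altPartialSum_zero]
  | succ n ih =>
    rw [sum_range_succ, ih, sum_range_succ, altPartialSum_succ]
    module

lemma sum_smul_eq_sum_altPartialSum_smul {x : ℕ → R} {n : ℕ}
    (hx : ∑ a ∈ range (n + 1), (-1) ^ a * x a = 0) (P : ℕ → M) :
    ∑ a ∈ range (n + 1), x a • P a = ∑ a ∈ range n, altPartialSum x a • (P (a + 1) + P a) := by
  rw [sum_smul_eq_sum_altPartialSum_smul_add, altPartialSum, hx, mul_zero, zero_smul, add_zero]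

end Telescoping

lemma isOpen_UHP : IsOpen UHP := isOpen_lt continuous_const continuous_im

lemma sub_conj_ne_zero_of_mem_UHP {τ : ℂ} (hτ : τ ∈ UHP) : τ - starRingEnd ℂ τ ≠ 0 := by
  rw [sub_conj]
  have hy : 0 < τ.im := hτ
  exact mul_ne_zero (ofReal_ne_zero.mpr (by positivity)) I_ne_zero

section Wirtinger

variable {F G : ℂ → ℂ} {τ : ℂ}

lemma fderiv_real_apply_of_differentiableAt (hF : DifferentiableAt ℂ F τ) (w : ℂ) :
    fderiv ℝ F τ w = w * deriv F τ := by
  rw [hF.fderiv_restrictScalars ℝ, hF.hasDerivAt.hasFDerivAt.fderiv]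
  simp

lemma dtau_eq_deriv (hF : DifferentiableAt ℂ F τ) : dtau F τ = deriv F τ := by
  simp only [dtau, fderiv_real_apply_of_differentiableAt hF]
  linear_combination (-deriv F τ / 2) * I_sq

lemma dtau_congr (h : F =ᶠ[nhds τ] G) : dtau F τ = dtau G τ := by
  simp only [dtau, h.fderiv_eq]

lemma dtau_const_mul (c : ℂ) (hF : DifferentiableAt ℝ F τ) :
    dtau (fun z => c * F z) τ = c * dtau F τ := by
  simp only [dtau, fderiv_const_mul hF c, smul_apply, smul_eq_mul]
  ring

lemma dtau_mul (hF : DifferentiableAt ℝ F τ) (hG : DifferentiableAt ℝ G τ) :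
    dtau (fun z => F z * G z) τ = dtau F τ * G τ + F τ * dtau G τ := by
  simp only [dtau, fderiv_fun_mul hF hG, add_apply, smul_apply, smul_eq_mul]
  ring

lemma dtau_sum {ι : Type*} {s : Finset ι} {u : ι → ℂ → ℂ}
    (hu : ∀ a ∈ s, DifferentiableAt ℝ (u a) τ) :
    dtau (fun z => ∑ a ∈ s, u a z) τ = ∑ a ∈ s, dtau (u a) τ := by
  simp only [dtau, fderiv_fun_sum hu, FunLike.coe_sum, Finset.sum_apply,
    mul_sum, ← sum_sub_distrib, sum_div]

lemma dtau_comp (hF : DifferentiableAt ℂ F (G τ)) (hG : DifferentiableAt ℝ G τ) :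
    dtau (fun z => F (G z)) τ = deriv F (G τ) * dtau G τ := by
  have hcomp : fderiv ℝ (F ∘ G) τ = (fderiv ℝ F (G τ)).comp (fderiv ℝ G τ) :=
    fderiv_comp τ (hF.restrictScalars ℝ) hG
  simp only [dtau, Function.comp_def] at hcomp ⊢
  simp only [hcomp, ContinuousLinearMap.comp_apply, fderiv_real_apply_of_differentiableAt hF]
  ring

lemma dtau_pow (hG : DifferentiableAt ℝ G τ) (m : ℕ) :
    dtau (fun z => G z ^ m) τ = m * G τ ^ (m - 1) * dtau G τ := by
  rw [dtau_comp (F := fun w : ℂ => w ^ m) (differentiableAt_pow m) hG, (hasDerivAt_pow m _).deriv]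

lemma dtau_sub_conj : dtau (fun z => z - starRingEnd ℂ z) τ = 1 := by
  have hconj : DifferentiableAt ℝ (fun z : ℂ => starRingEnd ℂ z) τ := conjCLE.differentiableAt
  have hconj' : fderiv ℝ (fun z : ℂ => starRingEnd ℂ z) τ = conjCLE.toContinuousLinearMap :=
    conjCLE.fderiv
  rw [dtau, fderiv_fun_sub differentiableAt_fun_id hconj, hconj', fderiv_fun_id]
  simp only [sub_apply, ContinuousLinearMap.id_apply, ContinuousLinearEquiv.coe_coe,
    ContinuousAlgEquiv.coeCLE_apply, conjCAE_apply, map_one, sub_self, conj_I, sub_neg_eq_add,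
    zero_sub]
  linear_combination -I_sq

end Wirtinger

def weightFactor (z : ℂ) : ℂ := (2 * π * I * (z - starRingEnd ℂ z))⁻¹

lemma differentiableAt_weightFactor {τ : ℂ} (hτ : τ ∈ UHP) :
    DifferentiableAt ℝ weightFactor τ :=
  ((differentiableAt_fun_id.fun_sub conjCLE.differentiableAt).const_mul _).inv
    (mul_ne_zero two_pi_I_ne_zero (sub_conj_ne_zero_of_mem_UHP hτ))

lemma dtau_weightFactor {τ : ℂ} (hτ : τ ∈ UHP) :
    dtau weightFactor τ = -(2 * π * I) * weightFactor τ ^ 2 := by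
  have hne := mul_ne_zero two_pi_I_ne_zero (sub_conj_ne_zero_of_mem_UHP hτ)
  have hsub : DifferentiableAt ℝ (fun z : ℂ => z - starRingEnd ℂ z) τ :=
    differentiableAt_fun_id.fun_sub conjCLE.differentiableAt
  have hlin := hsub.const_mul (2 * π * I)
  have hchain := dtau_comp (F := fun w : ℂ => w⁻¹)
    (G := fun z : ℂ => 2 * π * I * (z - starRingEnd ℂ z)) (differentiableAt_inv hne) hlin
  rw [dtau_const_mul _ hsub, dtau_sub_conj, deriv_inv] at hchain
  rw [show weightFactor = fun z => (2 * π * I * (z - starRingEnd ℂ z))⁻¹ from rfl, hchain,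
    inv_pow]
  ring

section Raising

lemma Riter_zero (w : ℤ) (F : ℂ → ℂ) : Riter w 0 F = F := rfl

variable {w : ℤ} {F G : ℂ → ℂ} {τ : ℂ}

lemma Rop_eq_dtau_add :
    Rop w F τ = (2 * π * I)⁻¹ * dtau F τ + w * weightFactor τ * F τ := by
  simp only [Rop, weightFactor, mul_inv, div_eq_mul_inv]
  ring

lemma Rop_congr (h : F =ᶠ[nhds τ] G) : Rop w F τ = Rop w G τ := by
  simp only [Rop, dtau_congr h, h.eq_of_nhds]

lemma Rop_add_mul (w₁ w₂ : ℤ) (hF : DifferentiableAt ℝ F τ) (hG : DifferentiableAt ℝ G τ) :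
    Rop (w₁ + w₂) (fun z => F z * G z) τ = Rop w₁ F τ * G τ + F τ * Rop w₂ G τ := by
  simp only [Rop_eq_dtau_add, dtau_mul hF hG]
  push_cast
  ring

lemma Rop_const_mul (c : ℂ) (hF : DifferentiableAt ℝ F τ) :
    Rop w (fun z => c * F z) τ = c * Rop w F τ := by
  simp only [Rop_eq_dtau_add, dtau_const_mul c hF]
  ring

lemma Rop_sum {ι : Type*} {s : Finset ι} {u : ι → ℂ → ℂ}
    (hu : ∀ a ∈ s, DifferentiableAt ℝ (u a) τ) :
    Rop w (fun z => ∑ a ∈ s, u a z) τ = ∑ a ∈ s, Rop w (u a) τ := by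
  simp only [Rop_eq_dtau_add, dtau_sum hu, mul_sum, ← sum_add_distrib]

lemma Rop_weightFactor_pow_mul (hτ : τ ∈ UHP) (m : ℕ) (hF : DifferentiableAt ℂ F τ) :
    Rop w (fun z => weightFactor z ^ m * F z) τ
      = (w - m) * weightFactor τ ^ (m + 1) * F τ
        + weightFactor τ ^ m * ((2 * π * I)⁻¹ * deriv F τ) := by
  have hv := differentiableAt_weightFactor hτ
  rw [Rop_eq_dtau_add, dtau_mul (hv.fun_pow m) (hF.restrictScalars ℝ), dtau_pow hv,
    dtau_weightFactor hτ, dtau_eq_deriv hF]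
  have h2πI : (2 * π * I : ℂ)⁻¹ * (2 * π * I) = 1 := inv_mul_cancel₀ two_pi_I_ne_zero
  rcases m with _ | m
  · simp only [CharP.cast_eq_zero, sub_zero, zero_mul, zero_add, pow_zero, one_mul]
    ring
  · push_cast
    linear_combination (-((m : ℂ) + 1) * weightFactor τ ^ (m + 2) * F τ) * h2πI

end Raising

section HolomorphicDerivatives

variable {f : ℂ → ℂ}

lemma analyticOnNhd_iteratedDeriv (hf : DifferentiableOn ℂ f UHP) :
    ∀ j, AnalyticOnNhd ℂ (iteratedDeriv j f) UHP
  | 0 => by simpa only [iteratedDeriv_zero] using hf.analyticOnNhd isOpen_UHP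
  | j + 1 => by
    simpa only [iteratedDeriv_succ] using (analyticOnNhd_iteratedDeriv hf j).deriv

lemma differentiableAt_fder (hf : DifferentiableOn ℂ f UHP) (j : ℕ) {τ : ℂ} (hτ : τ ∈ UHP) :
    DifferentiableAt ℂ (fder j f) τ :=
  ((analyticOnNhd_iteratedDeriv hf j τ hτ).differentiableAt).const_mul _

lemma fder_zero : fder 0 f = f := by
  ext z
  simp [fder]

lemma two_pi_I_inv_mul_deriv_fder (j : ℕ) (τ : ℂ) :
    (2 * π * I)⁻¹ * deriv (fder j f) τ = fder (j + 1) f τ := by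
  unfold fder
  rw [deriv_const_mul_field', iteratedDeriv_succ, pow_succ, mul_inv]
  ring

end HolomorphicDerivatives

def raisingCoeff (k n j : ℕ) : ℕ := n.choose j * (k + j).ascFactorial (n - j)

section RaisingCoeff

variable {k n j : ℕ}

lemma raisingCoeff_eq_zero_of_lt (h : n < j) : raisingCoeff k n j = 0 := by
  simp [raisingCoeff, Nat.choose_eq_zero_of_lt h]

lemma raisingCoeff_succ_zero : raisingCoeff k (n + 1) 0 = (k + n) * raisingCoeff k n 0 := by
  simp [raisingCoeff, Nat.ascFactorial_succ]

lemma raisingCoeff_succ_succ (h : j ≤ n) :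
    raisingCoeff k (n + 1) (j + 1) = (k + n + j + 1) * raisingCoeff k n (j + 1)
      + raisingCoeff k n j := by
  obtain rfl | hlt := h.eq_or_lt
  · simp [raisingCoeff]
  obtain ⟨m, rfl⟩ : ∃ m, n = j + m + 1 := ⟨n - j - 1, by omega⟩
  have hasc : (k + j).ascFactorial (m + 1) = (k + j) * (k + j + 1).ascFactorial m := by
    simpa [add_comm 1 m, Nat.ascFactorial_succ] using
      (Nat.ascFactorial_mul_ascFactorial (k + j) 1 m).symm
  have hchoose := Nat.choose_succ_right_eq (j + m + 1) j
  simp only [raisingCoeff, show j + m + 1 + 1 - (j + 1) = m + 1 by omega,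
    show j + m + 1 - (j + 1) = m by omega, show j + m + 1 - j = m + 1 by omega,
    show k + (j + 1) = k + j + 1 by omega] at hchoose ⊢
  rw [Nat.choose_succ_succ', Nat.ascFactorial_succ (n := k + j + 1), hasc]
  zify at hchoose ⊢
  linear_combination -((k + j + 1 : ℕ).ascFactorial m : ℤ) * hchoose

lemma sum_range_raisingCoeff_of_le {R : Type*} [Semiring R] (X : ℕ → R) {N : ℕ} (h : n ≤ N) :
    ∑ j ∈ range (n + 1), (raisingCoeff k n j : R) * X j
      = ∑ j ∈ range (N + 1), (raisingCoeff k n j : R) * X j :=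
  sum_subset (range_subset_range.mpr (by omega)) fun j _ hj => by
    rw [raisingCoeff_eq_zero_of_lt (by simpa using hj), Nat.cast_zero, zero_mul]

lemma sum_raisingCoeff_succ (X : ℕ → ℂ) :
    ∑ j ∈ range (n + 2), (raisingCoeff k (n + 1) j : ℂ) * X j
      = ∑ j ∈ range (n + 1), (raisingCoeff k n j : ℂ) * ((k + n + j) * X j + X (j + 1)) := by
  have hsucc : ∀ j ∈ range (n + 1), (raisingCoeff k (n + 1) (j + 1) : ℂ) * X (j + 1)
      = raisingCoeff k n (j + 1) * ((k + n + (j + 1 : ℕ)) * X (j + 1))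
        + raisingCoeff k n j * X (j + 1) := fun j hj => by
    rw [raisingCoeff_succ_succ (Nat.lt_succ_iff.mp (mem_range.mp hj))]
    push_cast
    ring
  rw [sum_range_succ', sum_congr rfl hsucc, sum_add_distrib, sum_range_succ,
    raisingCoeff_eq_zero_of_lt (Nat.lt_succ_self n), raisingCoeff_succ_zero]
  simp only [mul_add, sum_add_distrib,
    sum_range_succ' (fun j => (raisingCoeff k n j : ℂ) * ((k + n + j) * X j))]
  push_cast
  ring

end RaisingCoeff

def raisingExpansion (k n : ℕ) (f : ℂ → ℂ) : ℂ → ℂ := fun z =>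
  ∑ j ∈ range (n + 1), (raisingCoeff k n j : ℂ) * (weightFactor z ^ (n - j) * fder j f z)

section RaisingExpansion

variable {f : ℂ → ℂ} {τ : ℂ}

lemma differentiableAt_raisingExpansion (hf : DifferentiableOn ℂ f UHP) (hτ : τ ∈ UHP)
    (k n : ℕ) : DifferentiableAt ℝ (raisingExpansion k n f) τ :=
  DifferentiableAt.fun_sum fun j _ => (((differentiableAt_weightFactor hτ).fun_pow _).fun_mul
    ((differentiableAt_fder hf j hτ).restrictScalars ℝ)).const_mul _

lemma Rop_raisingExpansion_term (hf : DifferentiableOn ℂ f UHP) (hτ : τ ∈ UHP) (k : ℕ) {n j : ℕ}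
    (hj : j ≤ n) :
    Rop (k + 2 * n)
        (fun z => (raisingCoeff k n j : ℂ) * (weightFactor z ^ (n - j) * fder j f z)) τ
      = raisingCoeff k n j * ((k + n + j) * (weightFactor τ ^ (n + 1 - j) * fder j f τ)
        + weightFactor τ ^ (n + 1 - (j + 1)) * fder (j + 1) f τ) := by
  have hfj := differentiableAt_fder hf j hτ
  rw [Rop_const_mul _ (((differentiableAt_weightFactor hτ).fun_pow _).fun_mul
      (hfj.restrictScalars ℝ)), Rop_weightFactor_pow_mul hτ _ hfj, two_pi_I_inv_mul_deriv_fder,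
    show n + 1 - j = n - j + 1 by omega, show n + 1 - (j + 1) = n - j by omega]
  push_cast [Nat.cast_sub hj]
  ring

theorem Riter_eqOn_raisingExpansion (hf : DifferentiableOn ℂ f UHP) (k : ℕ) :
    ∀ n, Set.EqOn (Riter k n f) (raisingExpansion k n f) UHP
  | 0 => fun τ _ => by simp [Riter, raisingExpansion, raisingCoeff, fder_zero]
  | n + 1 => fun τ hτ => by
    have hev : Riter k n f =ᶠ[nhds τ] raisingExpansion k n f :=
      Filter.eventuallyEq_of_mem (isOpen_UHP.mem_nhds hτ) (Riter_eqOn_raisingExpansion hf k n)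
    change Rop (k + 2 * n) (Riter k n f) τ = _
    rw [Rop_congr hev]
    unfold raisingExpansion
    rw [Rop_sum fun j _ =>
        (((differentiableAt_weightFactor hτ).fun_pow _).fun_mul
          ((differentiableAt_fder hf j hτ).restrictScalars ℝ)).const_mul _,
      sum_congr rfl fun j hj => Rop_raisingExpansion_term hf hτ k (mem_range_succ_iff.mp hj)]
    exact (sum_raisingCoeff_succ _).symm

lemma differentiableAt_Riter (hf : DifferentiableOn ℂ f UHP) (hτ : τ ∈ UHP) (k n : ℕ) :
    DifferentiableAt ℝ (Riter k n f) τ :=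
  (differentiableAt_raisingExpansion hf hτ k n).congr_of_eventuallyEq
    (Filter.eventuallyEq_of_mem (isOpen_UHP.mem_nhds hτ) (Riter_eqOn_raisingExpansion hf k n))

end RaisingExpansion

lemma cast_succ_ascFactorial_eq_div (a m : ℕ) :
    ((a + 1).ascFactorial m : ℚ) = (a + m).factorial / a.factorial := by
  rw [eq_div_iff (by positivity), mul_comm]
  exact_mod_cast Nat.factorial_mul_ascFactorial a m

lemma factorial_mul_choose_mul_raisingCoeff (K L i j u w : ℕ) :
    (u + w).factorial * ((K + (i + j + u + w)).choose (i + u)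
        * (L + (i + j + u + w)).choose (j + w)
        * raisingCoeff (K + 1) (j + w) j * raisingCoeff (L + 1) (i + u) i)
      = (u + w).choose u * ((K + (i + j + u + w)).choose i * (L + (i + j + u + w)).choose j
        * (K + 1 + j).ascFactorial (u + w) * (L + 1 + i).ascFactorial (u + w)) := by
  apply @Nat.cast_injective ℚ
  simp only [raisingCoeff, Nat.add_sub_cancel_left, Nat.cast_mul]
  rw [show K + 1 + j = K + j + 1 by omega, show L + 1 + i = L + i + 1 by omega,
    cast_succ_ascFactorial_eq_div, cast_succ_ascFactorial_eq_div,
    cast_succ_ascFactorial_eq_div, cast_succ_ascFactorial_eq_div,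
    Nat.cast_choose ℚ (show i + u ≤ K + (i + j + u + w) by omega),
    Nat.cast_choose ℚ (show j + w ≤ L + (i + j + u + w) by omega),
    Nat.cast_choose ℚ (show j ≤ j + w by omega), Nat.cast_choose ℚ (show i ≤ i + u by omega),
    Nat.cast_choose ℚ (show u ≤ u + w by omega),
    Nat.cast_choose ℚ (show i ≤ K + (i + j + u + w) by omega),
    Nat.cast_choose ℚ (show j ≤ L + (i + j + u + w) by omega),
    show K + (i + j + u + w) - (i + u) = K + j + w by omega,
    show L + (i + j + u + w) - (j + w) = L + i + u by omega,
    show K + (i + j + u + w) - i = K + j + (u + w) by omega,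
    show L + (i + j + u + w) - j = L + i + (u + w) by omega,
    Nat.add_sub_cancel_left, Nat.add_sub_cancel_left, Nat.add_sub_cancel_left]
  field_simp

lemma sum_alternating_choose_mul_raisingCoeff (K L r i j : ℕ) :
    ∑ s ∈ range (r + 1), (-1 : ℤ) ^ s * (K + r).choose s * (L + r).choose (r - s)
        * raisingCoeff (K + 1) (r - s) j * raisingCoeff (L + 1) s i
      = if i + j = r then (-1 : ℤ) ^ i * (K + r).choose i * (L + r).choose j else 0 := by
  set t : ℕ → ℤ := fun s => (-1 : ℤ) ^ s * (K + r).choose s * (L + r).choose (r - s)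
      * raisingCoeff (K + 1) (r - s) j * raisingCoeff (L + 1) s i
  have hvanish : ∀ s, s < i ∨ r - s < j → t s = 0 := by
    rintro s (hs | hs) <;> simp [t, raisingCoeff_eq_zero_of_lt hs]
  rcases lt_or_ge r (i + j) with hlt | hle
  · rw [if_neg hlt.ne', sum_eq_zero fun s hs => hvanish s (by simp at hs; omega)]
  obtain ⟨m, rfl⟩ := Nat.exists_eq_add_of_le hle
  have hrestrict : ∑ s ∈ range (i + j + m + 1), t s = ∑ u ∈ range (m + 1), t (i + u) := by
    rw [← sum_subset (s₁ := Ico i (i + m + 1)) (fun s hs => by simp at hs ⊢; omega)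
      fun s hs hs' => hvanish s (by simp at hs hs'; omega), sum_Ico_eq_sum_range,
      show i + m + 1 - i = m + 1 by omega]
  -- `m!` times a surviving term is a constant times `(-1)^u C(m,u)`,
  -- whose sum over `u` vanishes unless `m = 0`
  have hterm : ∀ u ∈ range (m + 1), (m.factorial : ℤ) * t (i + u)
      = (-1) ^ i * (K + (i + j + m)).choose i * (L + (i + j + m)).choose j
          * (K + 1 + j).ascFactorial m * (L + 1 + i).ascFactorial m
          * ((-1) ^ u * m.choose u) := by
    intro u hu
    obtain ⟨w, rfl⟩ := Nat.exists_eq_add_of_le (mem_range_succ_iff.mp hu)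
    have h : ((_ : ℕ) : ℤ) = _ :=
      congrArg Nat.cast (factorial_mul_choose_mul_raisingCoeff K L i j u w)
    push_cast at h
    simp only [t]
    rw [show i + j + (u + w) - (i + u) = j + w by omega, ← add_assoc (i + j) u w, pow_add]
    linear_combination (-1 : ℤ) ^ i * (-1) ^ u * h
  rw [hrestrict]
  apply mul_left_cancel₀ (show (m.factorial : ℤ) ≠ 0 by positivity)
  rw [mul_sum, sum_congr rfl hterm, ← mul_sum, Int.alternating_sum_range_choose]
  rcases m with _ | m <;> simp

lemma sum_alternating_mul_expansions (K L r : ℕ) (V : ℂ) (F G : ℕ → ℂ) :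
    ∑ s ∈ range (r + 1), (-1 : ℂ) ^ s * (K + r).choose s * (L + r).choose (r - s)
        * (∑ j ∈ range (r + 1), (raisingCoeff (K + 1) (r - s) j : ℂ) * (V ^ (r - s - j) * F j))
        * (∑ i ∈ range (r + 1), (raisingCoeff (L + 1) s i : ℂ) * (V ^ (s - i) * G i))
      = ∑ s ∈ range (r + 1), (-1 : ℂ) ^ s * (K + r).choose s * (L + r).choose (r - s)
        * F (r - s) * G s := by
  set c : ℕ → ℕ → ℕ → ℂ := fun s i j => (-1 : ℂ) ^ s * (K + r).choose s
    * (L + r).choose (r - s) * raisingCoeff (K + 1) (r - s) j * raisingCoeff (L + 1) s i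
  -- a term whose powers of `V` do not combine to `V ^ (r - (i + j))` has a vanishing coefficient
  have hpow : ∀ s ∈ range (r + 1), ∀ i j,
      c s i j * (V ^ (r - s - j) * V ^ (s - i)) = c s i j * V ^ (r - (i + j)) := by
    intro s hs i j
    by_cases hj : j ≤ r - s
    · by_cases hi : i ≤ s
      · rw [← pow_add, show r - s - j + (s - i) = r - (i + j) by simp at hs; omega]
      · simp [c, raisingCoeff_eq_zero_of_lt (not_le.mp hi)]
    · simp [c, raisingCoeff_eq_zero_of_lt (not_le.mp hj)]
  have hexpand : ∀ s ∈ range (r + 1),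
      (-1 : ℂ) ^ s * (K + r).choose s * (L + r).choose (r - s)
        * (∑ j ∈ range (r + 1), (raisingCoeff (K + 1) (r - s) j : ℂ) * (V ^ (r - s - j) * F j))
        * (∑ i ∈ range (r + 1), (raisingCoeff (L + 1) s i : ℂ) * (V ^ (s - i) * G i))
      = ∑ i ∈ range (r + 1), ∑ j ∈ range (r + 1), c s i j * V ^ (r - (i + j)) * (F j * G i) := by
    intro s hs
    rw [mul_assoc, mul_comm (∑ j ∈ _, _), sum_mul_sum, mul_sum]
    refine sum_congr rfl fun i _ => ?_
    rw [mul_sum]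
    refine sum_congr rfl fun j _ => ?_
    rw [← hpow s hs i j]
    ring
  have hcoef : ∀ i j, ∑ s ∈ range (r + 1), c s i j
      = if i + j = r then (-1 : ℂ) ^ i * (K + r).choose i * (L + r).choose j else 0 := by
    intro i j
    have h : ((_ : ℤ) : ℂ) = _ :=
      congrArg Int.cast (sum_alternating_choose_mul_raisingCoeff K L r i j)
    push_cast [apply_ite (Int.cast : ℤ → ℂ)] at h
    exact h
  rw [sum_congr rfl hexpand, sum_comm]
  refine sum_congr rfl fun i hi => ?_
  rw [sum_comm, sum_eq_single (r - i)]
  · rw [← sum_mul, ← sum_mul, hcoef, if_pos (by simp at hi; omega),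
      show r - (i + (r - i)) = 0 by omega]
    ring
  · intro j _ hj
    rw [← sum_mul, ← sum_mul, hcoef, if_neg (by omega)]
    ring
  · intro h
    exact absurd (mem_range.mpr (by omega)) h

theorem sum_alternating_Riter_mul_Riter {f g : ℂ → ℂ} (hf : DifferentiableOn ℂ f UHP)
    (hg : DifferentiableOn ℂ g UHP) {τ : ℂ} (hτ : τ ∈ UHP) (K L r : ℕ) :
    ∑ s ∈ range (r + 1), (-1 : ℂ) ^ s * (K + r).choose s * (L + r).choose (r - s)
        * (Riter (K + 1 : ℕ) (r - s) f τ * Riter (L + 1 : ℕ) s g τ)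
      = RCbracket (K + 1) (L + 1) r f g τ := by
  rw [RCbracket, show K + 1 + r - 1 = K + r by omega, show L + 1 + r - 1 = L + r by omega,
    ← sum_alternating_mul_expansions K L r (weightFactor τ) (fun j => fder j f τ)
      (fun i => fder i g τ)]
  refine sum_congr rfl fun s hs => ?_
  have hs : s ≤ r := mem_range_succ_iff.mp hs
  rw [Riter_eqOn_raisingExpansion hf _ _ hτ, Riter_eqOn_raisingExpansion hg _ _ hτ,
    raisingExpansion, raisingExpansion, sum_range_raisingCoeff_of_le _ (Nat.sub_le r s),
    sum_range_raisingCoeff_of_le _ hs]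
  ring

lemma Rop_Riter_mul_Riter {f g : ℂ → ℂ} (k l : ℤ) (a b : ℕ) {τ : ℂ}
    (hf : DifferentiableAt ℝ (Riter k a f) τ) (hg : DifferentiableAt ℝ (Riter l b g) τ) :
    Rop (k + l + 2 * (a + b)) (fun z => Riter k a f z * Riter l b g z) τ
      = Riter k (a + 1) f τ * Riter l b g τ + Riter k a f τ * Riter l (b + 1) g τ := by
  rw [show k + l + 2 * ((a : ℤ) + b) = (k + 2 * a) + (l + 2 * b) by ring,
    Rop_add_mul _ _ hf hg]
  rfl

def bracketCoeff (K L r a : ℕ) : ℚ := (-1) ^ (r - a) * (K + r).choose (r - a) * (L + r).choose a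

lemma sum_alternating_bracketCoeff (K L r : ℕ) :
    ∑ a ∈ range (r + 1), (-1) ^ a * bracketCoeff K L r a = (-1) ^ r * (K + L + 2 * r).choose r := by
  have hvandermonde : ((K + L + 2 * r).choose r : ℚ)
      = ∑ a ∈ range (r + 1), ((K + r).choose (r - a) : ℚ) * (L + r).choose a := by
    rw [show K + L + 2 * r = (L + r) + (K + r) by ring, Nat.add_choose_eq,
      Nat.sum_antidiagonal_eq_sum_range_succ fun i j => (L + r).choose i * (K + r).choose j]
    push_cast
    exact sum_congr rfl fun a _ => mul_comm _ _
  rw [hvandermonde, mul_sum]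
  refine sum_congr rfl fun a ha => ?_
  rw [bracketCoeff, ← mul_assoc, ← mul_assoc, ← pow_add,
    Nat.add_sub_cancel' (mem_range_succ_iff.mp ha), mul_assoc]

lemma RCbracket_eq_sum_bracketCoeff {f g : ℂ → ℂ} (hf : DifferentiableOn ℂ f UHP)
    (hg : DifferentiableOn ℂ g UHP) {τ : ℂ} (hτ : τ ∈ UHP) (K L r : ℕ) :
    RCbracket (K + 1) (L + 1) r f g τ = ∑ a ∈ range (r + 1),
      (bracketCoeff K L r a : ℂ) * (Riter (K + 1 : ℕ) a f τ * Riter (L + 1 : ℕ) (r - a) g τ) := by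
  rw [← sum_alternating_Riter_mul_Riter hf hg hτ, ← sum_range_reflect]
  refine sum_congr rfl fun a ha => ?_
  simp only [bracketCoeff, add_tsub_cancel_right, Nat.sub_sub_self (mem_range_succ_iff.mp ha)]
  push_cast
  ring

def correctionCoeff (K L r a : ℕ) : ℚ :=
  (if a = r then 1 else 0) - ((K + L + 2 * r).choose r : ℚ)⁻¹ * bracketCoeff K L r a

lemma sum_alternating_correctionCoeff (K L r : ℕ) :
    ∑ a ∈ range (r + 1), (-1) ^ a * correctionCoeff K L r a = 0 := by
  have hc : ((K + L + 2 * r).choose r : ℚ) ≠ 0 := by exact_mod_cast (Nat.choose_pos (by omega)).ne'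
  simp only [correctionCoeff, mul_sub, sum_sub_distrib, mul_ite, mul_one, mul_zero, sum_ite_eq',
    mem_range_succ_iff.mpr le_rfl, if_true, mul_left_comm _ ((K + L + 2 * r).choose r : ℚ)⁻¹,
    ← mul_sum, sum_alternating_bracketCoeff]
  field_simp
  ring

lemma sum_correctionCoeff_mul (K L r : ℕ) (P : ℕ → ℂ) :
    ∑ a ∈ range (r + 1), (correctionCoeff K L r a : ℂ) * P a
      = P r - ((K + L + 2 * r).choose r : ℂ)⁻¹
        * ∑ a ∈ range (r + 1), (bracketCoeff K L r a : ℂ) * P a := by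
  simp only [correctionCoeff, Rat.cast_sub, Rat.cast_mul, Rat.cast_inv, Rat.cast_natCast,
    apply_ite Rat.cast, Rat.cast_one, Rat.cast_zero, sub_mul, ite_mul, one_mul, zero_mul,
    sum_sub_distrib, sum_ite_eq', mem_range_succ_iff.mpr le_rfl, if_true, mul_assoc, ← mul_sum]

lemma Rop_sum_Riter_mul_Riter {f g : ℂ → ℂ} (hf : DifferentiableOn ℂ f UHP)
    (hg : DifferentiableOn ℂ g UHP) {τ : ℂ} (hτ : τ ∈ UHP) (k l r : ℕ) (b : ℕ → ℂ) :
    Rop ((k : ℤ) + l + 2 * r - 2)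
        (fun z => ∑ a ∈ range r, b a * Riter (k : ℤ) a f z * Riter (l : ℤ) (r - 1 - a) g z) τ
      = ∑ a ∈ range r, b a * (Riter (k : ℤ) (a + 1) f τ * Riter (l : ℤ) (r - (a + 1)) g τ
          + Riter (k : ℤ) a f τ * Riter (l : ℤ) (r - a) g τ) := by
  have hR := fun a c =>
    (differentiableAt_Riter hf hτ k a).fun_mul (differentiableAt_Riter hg hτ l c)
  simp only [mul_assoc]
  rw [Rop_sum fun a _ => (hR a _).const_mul _]
  refine sum_congr rfl fun a ha => ?_
  have ha : a < r := mem_range.mp ha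
  rw [Rop_const_mul _ (hR a _),
    show (k : ℤ) + l + 2 * r - 2 = k + l + 2 * ((a : ℤ) + (r - 1 - a : ℕ)) by omega,
    Rop_Riter_mul_Riter _ _ _ _ (differentiableAt_Riter hf hτ _ a)
      (differentiableAt_Riter hg hτ _ _),
    show r - 1 - a + 1 = r - a by omega, show r - (a + 1) = r - 1 - a by omega]

theorem stmt6_general (k l r : ℕ) (hk : 1 ≤ k) (hl : 1 ≤ l) :
    ∃ b : ℕ → ℚ,
      ∀ f g : ℂ → ℂ, DifferentiableOn ℂ f UHP → DifferentiableOn ℂ g UHP →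
        ∀ τ ∈ UHP,
          Riter (k : ℤ) r f τ * g τ
            = ((Nat.choose (k + l + 2 * r - 2) r : ℂ))⁻¹ * RCbracket k l r f g τ
              + Rop ((k : ℤ) + l + 2 * r - 2)
                  (fun z => ∑ s ∈ Finset.range r,
                    (b s : ℂ) * Riter (k : ℤ) s f z * Riter (l : ℤ) (r - 1 - s) g z) τ := by
  obtain ⟨K, rfl⟩ : ∃ K, k = K + 1 := ⟨k - 1, by omega⟩
  obtain ⟨L, rfl⟩ : ∃ L, l = L + 1 := ⟨l - 1, by omega⟩
  refine ⟨altPartialSum (correctionCoeff K L r), fun f g hf hg τ hτ => ?_⟩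
  have htele := sum_smul_eq_sum_altPartialSum_smul (sum_alternating_correctionCoeff K L r)
    fun a => Riter (K + 1 : ℕ) a f τ * Riter (L + 1 : ℕ) (r - a) g τ
  simp only [Rat.smul_def, sum_correctionCoeff_mul, Nat.sub_self, Riter_zero] at htele
  rw [Rop_sum_Riter_mul_Riter hf hg hτ, ← htele, RCbracket_eq_sum_bracketCoeff hf hg hτ,
    show K + 1 + (L + 1) + 2 * r - 2 = K + L + 2 * r by omega]
  ring

/-- for integers `k, l ≥ 1`, `r ≥ 1` there are rationals `b_0, …, b_{r−1}`
such that for all holomorphic `f, g` on `ℍ`: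
`R_k^r(f)·g = C(k+l+2r−2,r)⁻¹·[f,g]_r + R_{k+l+2r−2}(Σ_{s<r} b_s R_k^s(f) R_l^{r−1−s}(g))`. -/
theorem stmt6 (k l r : ℕ) (hk : 1 ≤ k) (hl : 1 ≤ l) (hr : 1 ≤ r) :
    ∃ b : ℕ → ℚ,
      ∀ f g : ℂ → ℂ, DifferentiableOn ℂ f UHP → DifferentiableOn ℂ g UHP →
        ∀ τ ∈ UHP,
          Riter (k : ℤ) r f τ * g τ
            = ((Nat.choose (k + l + 2 * r - 2) r : ℂ))⁻¹ * RCbracket k l r f g τ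
              + Rop ((k : ℤ) + l + 2 * r - 2)
                  (fun z => ∑ s ∈ Finset.range r,
                    (b s : ℂ) * Riter (k : ℤ) s f z * Riter (l : ℤ) (r - 1 - s) g z) τ :=
  stmt6_general k l r hk hl
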